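/- Let (X,T) be a topological dynamical system on a compact metric space and suppose that for some d ≥ 1 and n ≥ 1 one has N_{d+1}(X,T) = N_{d+1}(X,T^n). Then the set Ω_d = {x ∈ X : closure of orbit of (x,…,x) under T×T²×…×T^d equals closure of orbit of (x,…,x) under T^n×T^{2n}×…×T^{dn}} contains a dense G_δ subset of X. -/

import Mathlib

/-!
Write `O(x, S)` for the orbit of the diagonal point `(x, …, x)` under `S × S² × … × S^d`.
Splitting off the first coordinate, `N_{d+1}(X, S)` is the closure of the graph of
`x ↦ O(x, S)`, and `(x, w)` lies in `N_{d+1}(X, T) = N_{d+1}(X, T^n)` for every `w ∈ O(x, T)`.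
Since `x ↦ O(x, T^n)` is lower semicontinuous, each `x ↦ infDist z (O(x, T^n))` is upper
semicontinuous, hence continuous on a residual set; taking `z` in a countable dense set, on a
residual set all of them are continuous. At such `x` the fibre over `x` of the closed graph lies
in `cl O(x, T^n)`, so `O(x, T) ⊆ cl O(x, T^n)`; the reverse inclusion holds because `T^n`-orbits
are `T`-orbits.
-/

/-- `N_d(X,S)`: the closure of the orbit of the diagonal `Δ_d(X)` under
`S × S² × … × S^d`. -/
def NdTau {X : Type*} [MetricSpace X] (d : ℕ) (S : Equiv.Perm X) :
    Set (Fin d → X) :=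
  closure {v | ∃ (x : X) (m : ℤ), v = fun i : Fin d => (S ^ (((i : ℕ) + 1) * m)) x}

open Metric Filter Set Topology

theorem UpperSemicontinuous.setOf_continuousAt_mem_residual {α : Type*} [TopologicalSpace α]
    {f : α → ℝ} (hf : UpperSemicontinuous f) : {x | ContinuousAt f x} ∈ residual α := by
  -- discontinuity points lie on the frontier of some open set `{f < q}`, `q ∈ ℚ`
  have hmeagre : IsMeagre (⋃ q : ℚ, frontier (f ⁻¹' Iio (q : ℝ))) := by
    refine isMeagre_iUnion fun q => IsNowhereDense.isMeagre ?_
    rw [isClosed_frontier.isNowhereDense_iff, ← frontier_compl]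
    exact interior_frontier (hf.isOpen_preimage _).isClosed_compl
  refine mem_of_superset hmeagre fun x hx => tendsto_order.2 ⟨fun a ha => ?_, hf x⟩
  obtain ⟨q, haq, hqx⟩ := exists_rat_btwn ha
  have hx_closure : x ∉ closure (f ⁻¹' Iio (q : ℝ)) := fun h => hx <|
    mem_iUnion.2 ⟨q, h, fun h' => hqx.not_gt (interior_subset (s := f ⁻¹' Iio (q : ℝ)) h')⟩
  rw [mem_closure_iff_frequently, not_frequently] at hx_closure
  filter_upwards [hx_closure] with y hy
  exact haq.trans_le (not_lt.1 hy)

section InfDist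

variable {X Y : Type*} [TopologicalSpace X] [PseudoMetricSpace Y]

theorem upperSemicontinuous_infDist_range {ι : Type*} [Nonempty ι] {φ : ι → X → Y}
    (hφ : ∀ i, Continuous (φ i)) (z : Y) :
    UpperSemicontinuous fun x => infDist z (range fun i => φ i x) := by
  intro x r hr
  obtain ⟨_, ⟨i, rfl⟩, hi⟩ := (infDist_lt_iff (range_nonempty _)).1 hr
  filter_upwards [(continuous_const.dist (hφ i)).continuousAt.eventually_lt continuousAt_const hi]
    with y hy
  exact (infDist_le_dist_of_mem (mem_range_self i)).trans_lt hy

theorem continuousAt_infDist_of_dense {F : X → Set Y} {D : Set Y} (hD : Dense D) {x : X}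
    (hc : ∀ z ∈ D, ContinuousAt (fun y => infDist z (F y)) x) (w : Y) :
    ContinuousAt (fun y => infDist w (F y)) x := by
  refine continuousAt_of_locally_uniform_approx_of_continuousAt fun u hu => ?_
  obtain ⟨ε, hε, hεu⟩ := mem_uniformity_dist.1 hu
  obtain ⟨z, hzD, hwz⟩ := hD.exists_dist_lt w hε
  refine ⟨univ, univ_mem, _, hc z hzD, fun y _ => hεu ?_⟩
  simpa using ((lipschitz_infDist_pt (F y)).dist_le_mul w z).trans_lt (by simpa using hwz)

theorem setOf_forall_continuousAt_infDist_mem_residual [TopologicalSpace.SeparableSpace Y]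
    {F : X → Set Y} (hF : ∀ z, UpperSemicontinuous fun x => infDist z (F x)) :
    {x | ∀ w, ContinuousAt (fun y => infDist w (F y)) x} ∈ residual X := by
  obtain ⟨D, hDc, hD⟩ := TopologicalSpace.exists_countable_dense Y
  refine mem_of_superset ((countable_bInter_mem hDc).2 fun z _ =>
    (hF z).setOf_continuousAt_mem_residual) fun x hx => ?_
  exact continuousAt_infDist_of_dense hD (by simpa using hx)

theorem mem_closure_of_mem_closure_graph {F : X → Set Y} {x : X} {w : Y}
    (hx : (x, w) ∈ closure {p : X × Y | p.2 ∈ F p.1})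
    (hc : ContinuousAt (fun y => infDist w (F y)) x) (hne : (F x).Nonempty) :
    w ∈ closure (F x) := by
  have hle : infDist w (F x) ≤ dist w w :=
    ContinuousWithinAt.closure_le (f := fun p : X × Y => infDist w (F p.1))
      (g := fun p => dist w p.2) hx (hc.comp_of_eq continuousAt_fst rfl).continuousWithinAt
      (continuous_const.dist continuous_snd).continuousWithinAt
      fun p hp => infDist_le_dist_of_mem hp
  rw [mem_closure_iff_infDist_zero hne]
  exact le_antisymm (by simpa using hle) infDist_nonneg

end InfDist

theorem Homeomorph.continuous_toEquiv_zpow {X : Type*} [TopologicalSpace X] (T : X ≃ₜ X)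
    (k : ℤ) : Continuous ⇑(T.toEquiv ^ k) := by
  let toPerm : (X ≃ₜ X) →* Equiv.Perm X := ⟨⟨Homeomorph.toEquiv, rfl⟩, fun _ _ => rfl⟩
  rw [← show toPerm (T ^ k) = T.toEquiv ^ k from map_zpow toPerm T k]
  exact (T ^ k).continuous

section DiagonalOrbit

variable {X : Type*} {d : ℕ}

def diagonalOrbit (S : Equiv.Perm X) (d : ℕ) (x : X) : Set (Fin d → X) :=
  {v | ∃ m : ℤ, v = fun i : Fin d => (S ^ (((i : ℕ) + 1) * m)) x}

theorem diagonalOrbit_eq_range (S : Equiv.Perm X) (x : X) :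
    diagonalOrbit S d x = range fun (m : ℤ) (i : Fin d) => (S ^ (((i : ℕ) + 1) * m)) x := by
  ext v
  exact exists_congr fun m => eq_comm

theorem diagonalOrbit_nonempty (S : Equiv.Perm X) (x : X) : (diagonalOrbit S d x).Nonempty :=
  ⟨_, 0, rfl⟩

theorem diagonalOrbit_pow_subset (S : Equiv.Perm X) (n : ℕ) (x : X) :
    diagonalOrbit (S ^ n) d x ⊆ diagonalOrbit S d x := by
  rintro _ ⟨m, rfl⟩
  refine ⟨n * m, funext fun i => ?_⟩
  rw [← zpow_natCast, ← zpow_mul, mul_left_comm]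

theorem upperSemicontinuous_infDist_diagonalOrbit [MetricSpace X] {S : Equiv.Perm X}
    (hS : ∀ k : ℤ, Continuous ⇑(S ^ k)) (z : Fin d → X) :
    UpperSemicontinuous fun x => infDist z (diagonalOrbit S d x) := by
  simp only [diagonalOrbit_eq_range]
  exact upperSemicontinuous_infDist_range (fun m => continuous_pi fun i => hS _) z

theorem cons_mem_NdTau [MetricSpace X] {S : Equiv.Perm X} {x : X} {w : Fin d → X}
    (hw : w ∈ diagonalOrbit S d x) : Fin.cons x w ∈ NdTau (d + 1) S := by
  obtain ⟨m, rfl⟩ := hw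
  refine subset_closure ⟨(S ^ (-m)) x, m, funext fun i => ?_⟩
  rw [← Equiv.Perm.mul_apply, ← zpow_add]
  refine Fin.cases ?_ (fun i => ?_) i
  · simp
  · simp only [Fin.cons_succ, Fin.val_succ]
    congr 2
    push_cast
    ring

theorem mem_closure_graph_of_cons_mem_NdTau [MetricSpace X] {S : Equiv.Perm X} {x : X}
    {w : Fin d → X} (h : Fin.cons x w ∈ NdTau (d + 1) S) :
    (x, w) ∈ closure {p : X × (Fin d → X) | p.2 ∈ diagonalOrbit S d p.1} := by
  have hsplit : Continuous fun u : Fin (d + 1) → X => (u 0, Fin.tail u) :=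
    (continuous_apply 0).prodMk (continuous_pi fun i => continuous_apply _)
  have hmaps : MapsTo (fun u : Fin (d + 1) → X => (u 0, Fin.tail u))
      {v | ∃ (y : X) (k : ℤ), v = fun i : Fin (d + 1) => (S ^ (((i : ℕ) + 1) * k)) y}
      {p | p.2 ∈ diagonalOrbit S d p.1} := by
    rintro _ ⟨y, k, rfl⟩
    refine ⟨k, funext fun i => ?_⟩
    simp only [Fin.tail, Fin.val_succ, Fin.val_zero]
    rw [← Equiv.Perm.mul_apply, ← zpow_add]
    congr 2
    push_cast
    ring
  simpa using map_mem_closure hsplit h hmaps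

end DiagonalOrbit

theorem stmt_11_general {X : Type*} [MetricSpace X] [CompactSpace X] (T : X ≃ₜ X)
    (d n : ℕ)
    (hN : NdTau (d + 1) T.toEquiv = NdTau (d + 1) (T.toEquiv ^ n)) :
    ∃ G : Set X,
      G ⊆ {x : X |
        closure {v : Fin d → X | ∃ m : ℤ,
            v = fun i : Fin d => (T.toEquiv ^ (((i : ℕ) + 1) * m)) x} =
        closure {v : Fin d → X | ∃ m : ℤ,
            v = fun i : Fin d => ((T.toEquiv ^ n) ^ (((i : ℕ) + 1) * m)) x}} ∧
      IsGδ G ∧ Dense G := by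
  have hcont (k : ℤ) : Continuous ⇑((T.toEquiv ^ n) ^ k) := by
    rw [← zpow_natCast, ← zpow_mul]
    exact T.continuous_toEquiv_zpow _
  obtain ⟨G, hGcont, hG, hGdense⟩ := mem_residual.1 <|
    setOf_forall_continuousAt_infDist_mem_residual
      (upperSemicontinuous_infDist_diagonalOrbit (d := d) hcont)
  refine ⟨G, fun x hx => ?_, hG, hGdense⟩
  show closure (diagonalOrbit T.toEquiv d x) = closure (diagonalOrbit (T.toEquiv ^ n) d x)
  refine (closure_minimal (fun w hw => ?_) isClosed_closure).antisymm
    (closure_mono (diagonalOrbit_pow_subset _ n x))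
  refine mem_closure_of_mem_closure_graph ?_ (hGcont hx w) (diagonalOrbit_nonempty _ x)
  exact mem_closure_graph_of_cons_mem_NdTau (hN ▸ cons_mem_NdTau hw)

/-- if `N_{d+1}(X,T) = N_{d+1}(X,T^n)` for some `d, n ≥ 1`, then
`Ω_d = {x : cl O(x^{(d)}, T×T²×…×T^d) = cl O(x^{(d)}, T^n×T^{2n}×…×T^{dn})}`
contains a dense `G_δ` subset of `X`. -/
theorem stmt_11 {X : Type*} [MetricSpace X] [CompactSpace X] (T : X ≃ₜ X)
    (d n : ℕ) (hd : 1 ≤ d) (hn : 1 ≤ n)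
    (hN : NdTau (d + 1) T.toEquiv = NdTau (d + 1) (T.toEquiv ^ n)) :
    ∃ G : Set X,
      G ⊆ {x : X |
        closure {v : Fin d → X | ∃ m : ℤ,
            v = fun i : Fin d => (T.toEquiv ^ (((i : ℕ) + 1) * m)) x} =
        closure {v : Fin d → X | ∃ m : ℤ,
            v = fun i : Fin d => ((T.toEquiv ^ n) ^ (((i : ℕ) + 1) * m)) x}} ∧
      IsGδ G ∧ Dense G :=
  stmt_11_general T d n hN
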